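/- (Equivalence of the weight-space and predictor-space margin problems for frozen-gate ReLU networks) Let (x⁽ⁿ⁾, y⁽ⁿ⁾, γ⁽ⁿ⁾), n = 1,…,N, be a dataset with x⁽ⁿ⁾ ∈ ℝ^D, y⁽ⁿ⁾ ∈ {−1,1}, γ⁽ⁿ⁾ ∈ {0,1}^H. Then the infimum of ‖w⁽¹⁾‖₂² + ‖w⁽²⁾‖₂² over all w⁽¹⁾ ∈ ℝ^{H×D}, w⁽²⁾ ∈ ℝ^H satisfying y⁽ⁿ⁾⟨Σ_{h: γ⁽ⁿ⁾_h = 1} w⁽²⁾_h w⁽¹⁾_h, x⁽ⁿ⁾⟩ ≥ 1 for all n equals the infimum of 2 Σ_{h=1}^H ‖ζ_h‖₂ over all ζ ∈ ℝ^{H×D} satisfying y⁽ⁿ⁾⟨Σ_{h: γ⁽ⁿ⁾_h = 1} ζ_h, x⁽ⁿ⁾⟩ ≥ 1 for all n (with both infima equal to +∞ if the constraints are infeasible). -/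

import Mathlib

open Finset RealInnerProductSpace
open scoped ENNReal

noncomputable section

/-! The two problems have the same feasible predictors `ζ_h = w⁽²⁾_h w⁽¹⁾_h`, and for a fixed
`ζ_h` the cheapest factorization costs `‖w⁽¹⁾_h‖² + (w⁽²⁾_h)² = 2‖ζ_h‖`: AM–GM gives `≥`, and
the balanced factorization `w⁽²⁾_h = √‖ζ_h‖`, `w⁽¹⁾_h = ζ_h / √‖ζ_h‖` attains it. -/

section Factorization

variable {E : Type*} [NormedAddCommGroup E] [NormedSpace ℝ E]

theorem two_mul_norm_smul_le_norm_sq_add_sq (a : ℝ) (u : E) :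
    2 * ‖a • u‖ ≤ ‖u‖ ^ 2 + a ^ 2 := by
  rw [norm_smul, Real.norm_eq_abs, ← sq_abs a]
  nlinarith [sq_nonneg (‖u‖ - |a|)]

theorem exists_smul_eq_and_norm_sq_add_sq_eq (v : E) :
    ∃ (a : ℝ) (u : E), a • u = v ∧ ‖u‖ ^ 2 + a ^ 2 = 2 * ‖v‖ := by
  rcases eq_or_ne v 0 with rfl | hv
  · exact ⟨0, 0, by simp, by simp⟩
  have hs : 0 < √‖v‖ := Real.sqrt_pos.mpr (norm_pos_iff.mpr hv)
  refine ⟨√‖v‖, (√‖v‖)⁻¹ • v, by rw [smul_smul, mul_inv_cancel₀ hs.ne', one_smul], ?_⟩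
  rw [norm_smul, Real.norm_eq_abs, abs_of_pos (inv_pos.mpr hs), mul_pow, inv_pow,
    Real.sq_sqrt (norm_nonneg v), sq, inv_mul_cancel_left₀ (norm_pos_iff.mpr hv).ne']
  ring

theorem sInf_factored_cost_eq_sInf_two_mul_sum_norm {ι : Type*} [Fintype ι]
    (P : (ι → E) → Prop) :
    sInf {c : ℝ≥0∞ | ∃ (w1 : ι → E) (w2 : ι → ℝ), P (fun h => w2 h • w1 h) ∧
        c = ENNReal.ofReal ((∑ h, ‖w1 h‖ ^ 2) + ∑ h, w2 h ^ 2)} =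
    sInf {c : ℝ≥0∞ | ∃ ζ : ι → E, P ζ ∧ c = ENNReal.ofReal (2 * ∑ h, ‖ζ h‖)} := by
  apply le_antisymm
  · refine le_sInf ?_
    rintro _ ⟨ζ, hζ, rfl⟩
    choose w2 w1 hsmul hcost using fun h => exists_smul_eq_and_norm_sq_add_sq_eq (ζ h)
    refine sInf_le ⟨w1, w2, by simpa only [hsmul] using hζ, ?_⟩
    rw [← sum_add_distrib, mul_sum]
    simp only [hcost]
  · refine le_sInf ?_
    rintro _ ⟨w1, w2, hw, rfl⟩
    have hcost : 2 * ∑ h, ‖w2 h • w1 h‖ ≤ (∑ h, ‖w1 h‖ ^ 2) + ∑ h, w2 h ^ 2 := by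
      rw [mul_sum, ← sum_add_distrib]
      exact sum_le_sum fun h _ => two_mul_norm_smul_le_norm_sq_add_sq (w2 h) (w1 h)
    refine (sInf_le ?_).trans (ENNReal.ofReal_le_ofReal hcost)
    exact ⟨_, hw, rfl⟩

end Factorization

theorem frelu_margin_problems_equivalent_general
    (H D N : ℕ)
    (x : Fin N → EuclideanSpace ℝ (Fin D)) (y : Fin N → ℝ)
    (γd : Fin N → Fin H → Bool) :
    sInf {v : ℝ≥0∞ | ∃ (w1 : Fin H → EuclideanSpace ℝ (Fin D)) (w2 : Fin H → ℝ),
        (∀ n, 1 ≤ y n *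
          ⟪∑ h ∈ Finset.univ.filter (fun h => γd n h = true), w2 h • w1 h, x n⟫) ∧
        v = ENNReal.ofReal ((∑ h, ‖w1 h‖ ^ 2) + ∑ h, (w2 h) ^ 2)} =
    sInf {v : ℝ≥0∞ | ∃ ζ : Fin H → EuclideanSpace ℝ (Fin D),
        (∀ n, 1 ≤ y n *
          ⟪∑ h ∈ Finset.univ.filter (fun h => γd n h = true), ζ h, x n⟫) ∧
        v = ENNReal.ofReal (2 * ∑ h, ‖ζ h‖)} :=
  sInf_factored_cost_eq_sInf_two_mul_sum_norm
    (fun ζ => ∀ n, 1 ≤ y n * ⟪∑ h ∈ Finset.univ.filter (fun h => γd n h = true), ζ h, x n⟫)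

/-- **Equivalence of the weight-space and predictor-space margin problems for frozen-gate
ReLU networks.** The infimum of `‖w⁽¹⁾‖₂² + ‖w⁽²⁾‖₂²` over weights satisfying the margin
constraints equals the infimum of the FReLU group-lasso norm `2 Σ_h ‖ζ_h‖₂` over auxiliary
variables satisfying the margin constraints (both computed in `ℝ≥0∞`, so infeasible
problems have value `⊤`). -/
theorem frelu_margin_problems_equivalent
    (H D N : ℕ)
    (x : Fin N → EuclideanSpace ℝ (Fin D)) (y : Fin N → ℝ)
    (hy : ∀ n, y n = 1 ∨ y n = -1) (γd : Fin N → Fin H → Bool) :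
    sInf {v : ℝ≥0∞ | ∃ (w1 : Fin H → EuclideanSpace ℝ (Fin D)) (w2 : Fin H → ℝ),
        (∀ n, 1 ≤ y n *
          ⟪∑ h ∈ Finset.univ.filter (fun h => γd n h = true), w2 h • w1 h, x n⟫) ∧
        v = ENNReal.ofReal ((∑ h, ‖w1 h‖ ^ 2) + ∑ h, (w2 h) ^ 2)} =
    sInf {v : ℝ≥0∞ | ∃ ζ : Fin H → EuclideanSpace ℝ (Fin D),
        (∀ n, 1 ≤ y n *
          ⟪∑ h ∈ Finset.univ.filter (fun h => γd n h = true), ζ h, x n⟫) ∧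
        v = ENNReal.ofReal (2 * ∑ h, ‖ζ h‖)} :=
  frelu_margin_problems_equivalent_general H D N x y γd

end
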